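/- Let G(z;t) = π^{-1/4} exp(−z²/2) Σ_{m=0}^{d-1} exp(−2πimt/d) g̃_m Θ₃(πm/d − iz√(π/(2d)), i/d), representing the state X^t|g⟩ with t ∈ ℝ. Then for every β ∈ ℤ and all z ∈ ℂ, t ∈ ℝ: if G(ζ; t) = 0 then G(ζ + β√(2π/d); t + β) = 0. Equivalently, the zero set of G(·; t+β) equals the zero set of G(·; t) shifted by β√(2π/d). -/

import Mathlib

/-!
Both factors of `Gt` transform multiplicatively under `z ↦ z + β√(2π/d)`, `t ↦ t + β`: the shift
moves the argument of each `Θ₃(·, i/d)` by a lattice period `π (i/d) (-β)`, producing the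
automorphy factor `exp (πβ²/d + 2πiβm/d + 2βz√(π/(2d)))`, which cancels exactly against the change
of the Gaussian `exp (-z²/2)` and of the phase `exp (-2πimt/d)`. Hence `Gt` is invariant under
the joint shift, and its zero set is translated.
-/

open Complex

noncomputable def Theta3 (u τ : ℂ) : ℂ :=
  ∑' n : ℤ, Complex.exp (Real.pi * I * τ * (n : ℂ) ^ 2 + 2 * I * (n : ℂ) * u)

noncomputable def Gt (d : ℕ) (gt : Fin d → ℂ) (z : ℂ) (t : ℝ) : ℂ :=
  (Real.pi ^ (-(1 / 4 : ℝ)) : ℝ) * Complex.exp (-(z ^ 2) / 2) *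
    ∑ m : Fin d, Complex.exp (-(2 * Real.pi * I * m * t) / d) * gt m *
      Theta3 ((Real.pi * m) / d - I * z * Real.sqrt (Real.pi / (2 * d))) (I / d)

-- No summability is needed: both sides are the same `tsum` up to the reindexing `n ↦ n + k`.
theorem Theta3_add_pi_mul_int (τ u : ℂ) (k : ℤ) :
    Theta3 (u + Real.pi * τ * k) τ
      = cexp (-(Real.pi * I * τ * k ^ 2) - 2 * I * k * u) * Theta3 u τ := by
  unfold Theta3
  rw [← tsum_mul_left]
  conv_rhs => rw [← (Equiv.addRight k).tsum_eq]
  refine tsum_congr fun n => ?_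
  rw [Equiv.coe_addRight, ← Complex.exp_add]
  congr 1
  push_cast
  ring

theorem Real.sqrt_two_mul_div (a x : ℝ) : √(2 * a / x) = 2 * √(a / (2 * x)) := by
  rw [show 2 * a / x = 2 ^ 2 * (a / (2 * x)) by ring,
    Real.sqrt_mul (by norm_num), Real.sqrt_sq zero_le_two]

theorem cexp_mul_Theta3_shift (d m b c z t : ℂ) (β : ℤ) (hb : b ^ 2 = Real.pi / (2 * d)) :
    cexp (-(z + β * (2 * b)) ^ 2 / 2) * (cexp (-(2 * Real.pi * I * m * (t + β)) / d) * c *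
        Theta3 (Real.pi * m / d - I * (z + β * (2 * b)) * b) (I / d))
      = cexp (-z ^ 2 / 2) * (cexp (-(2 * Real.pi * I * m * t) / d) * c *
        Theta3 (Real.pi * m / d - I * z * b) (I / d)) := by
  have harg : Real.pi * m / d - I * (z + β * (2 * b)) * b
      = (Real.pi * m / d - I * z * b) + Real.pi * (I / d) * ((-β : ℤ) : ℂ) := by
    push_cast
    linear_combination (-2 * I * β) * hb
  have hexp : cexp (-(z + β * (2 * b)) ^ 2 / 2) * cexp (-(2 * Real.pi * I * m * (t + β)) / d) *
        cexp (-(Real.pi * I * (I / d) * ((-β : ℤ) : ℂ) ^ 2) - 2 * I * ((-β : ℤ) : ℂ) *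
          (Real.pi * m / d - I * z * b))
      = cexp (-z ^ 2 / 2) * cexp (-(2 * Real.pi * I * m * t) / d) := by
    simp only [← Complex.exp_add]
    congr 1
    push_cast
    linear_combination (-2 * β * z * b - Real.pi * β ^ 2 / d) * I_sq + (-2 * β ^ 2) * hb
  rw [harg, Theta3_add_pi_mul_int]
  linear_combination (c * Theta3 (Real.pi * m / d - I * z * b) (I / d)) * hexp

theorem Gt_add_int (d : ℕ) (gt : Fin d → ℂ) (β : ℤ) (z : ℂ) (t : ℝ) :
    Gt d gt (z + β * √(2 * Real.pi / d)) (t + β) = Gt d gt z t := by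
  have hb : (√(Real.pi / (2 * d)) : ℂ) ^ 2 = Real.pi / (2 * d) := by
    exact_mod_cast Real.sq_sqrt (by positivity : 0 ≤ Real.pi / (2 * d))
  simp only [Gt, Real.sqrt_two_mul_div, Finset.mul_sum]
  refine Finset.sum_congr rfl fun m _ => ?_
  push_cast
  rw [mul_assoc, cexp_mul_Theta3_shift _ _ _ _ z t β hb, ← mul_assoc]

theorem zeros_shift_under_Xt_general (d : ℕ) (gt : Fin d → ℂ) :
    (∀ (β : ℤ) (ζ : ℂ) (t : ℝ), Gt d gt ζ t = 0 →
        Gt d gt (ζ + β * Real.sqrt (2 * Real.pi / d)) (t + β) = 0) ∧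
      ∀ (β : ℤ) (t : ℝ),
        {z : ℂ | Gt d gt z (t + β) = 0}
          = (fun z : ℂ => z + β * Real.sqrt (2 * Real.pi / d)) ''
              {z : ℂ | Gt d gt z t = 0} := by
  refine ⟨fun β ζ t h => (Gt_add_int d gt β ζ t).trans h, fun β t => ?_⟩
  rw [Set.image_add_right]
  ext z
  simp only [Set.mem_preimage, Set.mem_ofPred]
  rw [← Gt_add_int d gt β (z + -(β * √(2 * Real.pi / d))) t, neg_add_cancel_right]

theorem zeros_shift_under_Xt (d : ℕ) (hd : 0 < d) (gt : Fin d → ℂ) :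
    (∀ (β : ℤ) (ζ : ℂ) (t : ℝ), Gt d gt ζ t = 0 →
        Gt d gt (ζ + β * Real.sqrt (2 * Real.pi / d)) (t + β) = 0) ∧
      ∀ (β : ℤ) (t : ℝ),
        {z : ℂ | Gt d gt z (t + β) = 0}
          = (fun z : ℂ => z + β * Real.sqrt (2 * Real.pi / d)) ''
              {z : ℂ | Gt d gt z t = 0} :=
  zeros_shift_under_Xt_general d gt
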